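/- arXiv:2009.10470 — 5 statements merged into one kernel-verified Lean document; each statement's English description precedes it below -/
import Mathlib

section
/- There is no surjective group homomorphism (continuous or not) from a compact Hausdorff topological group onto the integers ℤ. -/
/-!
If `f a` generates `ℤ`, write `a = s * t` with `s` a `2ⁿ`-th power and `t` a `3ⁿ`-th power for
every `n`; then `f s` and `f t` are divisible by all powers of `2`, resp. `3`, so both vanish and
`f a` is trivial. The factorisation exists by compactness: for each `n` Bézout gives one with
exponent `n`, and these form a decreasing sequence of nonempty closed sets.
-/

open Set

lemma range_zpow_mul_subset {G : Type*} [Group G] (j k : ℤ) :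
    range (fun x : G => x ^ (j * k)) ⊆ range fun x : G => x ^ k := by
  rintro _ ⟨x, rfl⟩
  exact ⟨x ^ j, (zpow_mul x j k).symm⟩

lemma MonoidHom.map_mem_range_zpow {G H : Type*} [Group G] [Group H] (f : G →* H) {k : ℤ}
    {y : G} (hy : y ∈ Set.range fun x : G => x ^ k) : f y ∈ Set.range fun x : H => x ^ k := by
  obtain ⟨x, rfl⟩ := hy
  exact ⟨f x, (map_zpow f x k).symm⟩

theorem exists_eq_mul_forall_mem_range_zpow {G : Type*} [Group G] [TopologicalSpace G]
    [IsTopologicalGroup G] [CompactSpace G] [T2Space G] {p q : ℤ} (hpq : IsCoprime p q)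
    (a : G) : ∃ s t : G, a = s * t ∧
      ∀ n : ℕ, s ∈ range (fun x : G => x ^ p ^ n) ∧ t ∈ range fun x : G => x ^ q ^ n := by
  let C : ℕ → Set G := fun n =>
    (range fun x : G => x ^ p ^ n) ∩ (fun s => s⁻¹ * a) ⁻¹' range fun x : G => x ^ q ^ n
  have hclosed (n : ℕ) : IsClosed (C n) :=
    (isCompact_range (continuous_zpow _)).isClosed.inter
      ((isCompact_range (continuous_zpow _)).isClosed.preimage (by fun_prop))
  have hanti (n : ℕ) : C (n + 1) ⊆ C n := by
    simp only [C, pow_succ']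
    exact inter_subset_inter (range_zpow_mul_subset _ _)
      (preimage_mono (range_zpow_mul_subset _ _))
  have hne (n : ℕ) : (C n).Nonempty := by
    obtain ⟨u, v, huv⟩ := hpq.pow (m := n) (n := n)
    refine ⟨(a ^ u) ^ p ^ n, ⟨a ^ u, rfl⟩, a ^ v, ?_⟩
    dsimp only
    rw [← zpow_mul, ← zpow_mul, ← zpow_neg, ← zpow_add_one]
    congr 1
    linarith
  obtain ⟨s, hs⟩ := IsCompact.nonempty_iInter_of_sequence_nonempty_isCompact_isClosed C
    hanti hne (hclosed 0).isCompact hclosed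
  rw [mem_iInter] at hs
  exact ⟨s, s⁻¹ * a, (mul_inv_cancel_left s a).symm, hs⟩

lemma Multiplicative.eq_one_of_forall_mem_range_zpow {p : ℤ} (hp : p.natAbs ≠ 1)
    {y : Multiplicative ℤ} (hy : ∀ n : ℕ, y ∈ range fun x : Multiplicative ℤ => x ^ p ^ n) :
    y = 1 := by
  have hdvd (n : ℕ) : p ^ n ∣ y.toAdd := by
    obtain ⟨x, rfl⟩ := hy n
    exact ⟨x.toAdd, by rw [toAdd_zpow, smul_eq_mul]⟩
  by_contra hy1
  exact FiniteMultiplicity.not_iff_forall.mpr hdvd (Int.finiteMultiplicity_iff.mpr ⟨hp, hy1⟩)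

theorem no_surjective_hom_compact_to_int (G : Type*) [Group G] [TopologicalSpace G]
    [IsTopologicalGroup G] [CompactSpace G] [T2Space G] (f : G →* Multiplicative ℤ) :
    ¬ Function.Surjective f := by
  intro hf
  obtain ⟨a, ha⟩ := hf (Multiplicative.ofAdd 1)
  have h23 : IsCoprime (2 : ℤ) 3 := by norm_num [Int.isCoprime_iff_gcd_eq_one]
  obtain ⟨s, t, rfl, hst⟩ := exists_eq_mul_forall_mem_range_zpow h23 a
  have hs : f s = 1 := Multiplicative.eq_one_of_forall_mem_range_zpow (p := 2) (by decide)
    fun n => f.map_mem_range_zpow (hst n).1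
  have ht : f t = 1 := Multiplicative.eq_one_of_forall_mem_range_zpow (p := 3) (by decide)
    fun n => f.map_mem_range_zpow (hst n).2
  rw [map_mul, hs, ht, one_mul] at ha
  exact absurd ha (by decide)
end

section
/- Every group homomorphism (not assumed continuous) from a compact Hausdorff topological group to the integers ℤ, where ℤ carries the discrete topology, is continuous. -/
/-!
In a compact Hausdorff group every set of `n`-th powers is closed. If `q` and `p` are coprime then
every `g` is a `q`-th power times a `p ^ k`-th power for each `k`, so by compactness every `g` is a
`q`-th power times an element that is a `p ^ k`-th power for all `k` at once. A homomorphism `f`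
to `ℤ` kills such an element, so every `f g` is `q` times some `f y`; iterating, `f g` is divisible
by every power of `q`, hence is `0`.
-/

open Set

lemma Int.eq_zero_of_forall_pow_dvd {a m : ℤ} (ha : a.natAbs ≠ 1) (h : ∀ k : ℕ, a ^ k ∣ m) :
    m = 0 := by
  by_contra hm
  exact FiniteMultiplicity.not_iff_forall.mpr h (Int.finiteMultiplicity_iff.mpr ⟨ha, hm⟩)

lemma range_pow_mul_subset {M : Type*} [Monoid M] (m n : ℕ) :
    range (fun z : M ↦ z ^ (m * n)) ⊆ range (· ^ n) := by
  rintro _ ⟨z, rfl⟩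
  exact ⟨z ^ m, (pow_mul z m n).symm⟩

lemma MonoidHom.eq_one_of_mem_iInter_range_pow {M : Type*} [Monoid M]
    (f : M →* Multiplicative ℤ) {p : ℕ} (hp : p ≠ 1) {x : M}
    (hx : x ∈ ⋂ k, Set.range (· ^ p ^ k)) : f x = 1 := by
  have hdvd (k : ℕ) : (p : ℤ) ^ k ∣ (f x).toAdd := by
    obtain ⟨z, rfl⟩ := mem_iInter.mp hx k
    exact ⟨(f z).toAdd, by rw [map_pow, toAdd_pow, nsmul_eq_mul, Nat.cast_pow]⟩
  exact toAdd_eq_zero.mp (Int.eq_zero_of_forall_pow_dvd (by simpa using hp) hdvd)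

lemma exists_pow_mul_pow_eq_of_coprime {G : Type*} [Group G] (g : G) {m n : ℕ}
    (h : m.Coprime n) : ∃ y z : G, y ^ m * z ^ n = g := by
  obtain ⟨a, b, hab⟩ := Nat.isCoprime_iff_coprime.mpr h
  refine ⟨g ^ a, g ^ b, ?_⟩
  rw [← zpow_natCast, ← zpow_natCast, ← zpow_mul, ← zpow_mul, ← zpow_add, hab, zpow_one]

lemma isClosed_range_pow {M : Type*} [Monoid M] [TopologicalSpace M] [ContinuousMul M]
    [CompactSpace M] [T2Space M] (n : ℕ) : IsClosed (range fun z : M ↦ z ^ n) :=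
  (isCompact_range (continuous_pow n)).isClosed

section CompactGroup

variable {G : Type*} [Group G] [TopologicalSpace G] [IsTopologicalGroup G] [CompactSpace G]
  [T2Space G]

lemma exists_inv_pow_mul_mem_iInter_range_pow (g : G) {q p : ℕ} (h : q.Coprime p) :
    ∃ y : G, (y ^ q)⁻¹ * g ∈ ⋂ k, range (· ^ p ^ k) := by
  set C : ℕ → Set G := fun k ↦ (fun y ↦ (y ^ q)⁻¹ * g) ⁻¹' range (· ^ p ^ k)
  have hC_closed (k : ℕ) : IsClosed (C k) :=
    (isClosed_range_pow _).preimage (((continuous_pow q).inv).mul continuous_const)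
  have hC_anti (k : ℕ) : C (k + 1) ⊆ C k := fun y hy ↦
    range_pow_mul_subset p (p ^ k) (by rwa [← pow_succ'])
  have hC_nonempty (k : ℕ) : (C k).Nonempty := by
    obtain ⟨y, z, hyz⟩ := exists_pow_mul_pow_eq_of_coprime g (h.pow_right k)
    exact ⟨y, z, by simp only [← hyz, inv_mul_cancel_left]⟩
  obtain ⟨y, hy⟩ := IsCompact.nonempty_iInter_of_sequence_nonempty_isCompact_isClosed C hC_anti
    hC_nonempty (hC_closed 0).isCompact hC_closed
  exact ⟨y, by simpa [C] using hy⟩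

lemma MonoidHom.eq_one_of_compactSpace_of_multiplicativeInt (f : G →* Multiplicative ℤ) :
    f = 1 := by
  have h_sq (g : G) : ∃ y, f g = f y ^ 2 := by
    obtain ⟨y, hy⟩ := exists_inv_pow_mul_mem_iInter_range_pow g (by norm_num : Nat.Coprime 2 3)
    have := f.eq_one_of_mem_iInter_range_pow (by norm_num) hy
    rw [map_mul, map_inv, inv_mul_eq_one, map_pow] at this
    exact ⟨y, this.symm⟩
  have h_dvd (k : ℕ) : ∀ g, (2 : ℤ) ^ k ∣ (f g).toAdd := by
    induction k with
    | zero => simp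
    | succ k ih =>
      intro g
      obtain ⟨y, hy⟩ := h_sq g
      rw [hy, toAdd_pow, pow_succ', nsmul_eq_mul, Nat.cast_ofNat]
      exact mul_dvd_mul_left 2 (ih y)
  ext g
  exact toAdd_eq_zero.mp (Int.eq_zero_of_forall_pow_dvd (by norm_num) (h_dvd · g))

end CompactGroup

theorem hom_compact_to_int_continuous (G : Type*) [Group G] [TopologicalSpace G]
    [IsTopologicalGroup G] [CompactSpace G] [T2Space G] (f : G →* Multiplicative ℤ) :
    Continuous f := by
  rw [f.eq_one_of_compactSpace_of_multiplicativeInt]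
  exact continuous_const
end

section
/- There exists a group homomorphism from the product group ∏_{n ∈ ℕ} ℤ/2ℤ (with the product topology, each factor discrete) onto ℤ/2ℤ (discrete) that is not continuous. -/
instance : TopologicalSpace (ZMod 2) := ⊥
instance : DiscreteTopology (ZMod 2) := ⟨rfl⟩

/-
The sum-of-coordinates functional on finitely supported sequences extends, by choosing a linear
complement (a left inverse of the inclusion `(ℕ →₀ 𝔽₂) → (ℕ → 𝔽₂)`), to a linear functional `F`
on all of `ℕ → 𝔽₂` with `F eₙ = 1` for every basis vector `eₙ`. Continuity into a discrete group
would force `F eₙ = F 0 = 0` for almost all `n`, since `eₙ → 0` in the product topology.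
-/

open Filter Topology

theorem tendsto_pi_single_cofinite_nhds_zero {ι M : Type*} [DecidableEq ι] [Zero M]
    [TopologicalSpace M] (x : M) :
    Tendsto (fun i => Pi.single i x) cofinite (𝓝 (0 : ι → M)) :=
  tendsto_pi_nhds.2 fun j => tendsto_const_nhds.congr' <|
    (eventually_cofinite_ne j).mono fun _ hi => by simp [hi.symm]

theorem Continuous.eventually_apply_pi_single_eq {ι M N : Type*} [DecidableEq ι] [Zero M]
    [TopologicalSpace M] [TopologicalSpace N] [DiscreteTopology N] {f : (ι → M) → N}
    (hf : Continuous f) (x : M) : ∀ᶠ i in cofinite, f (Pi.single i x) = f 0 := by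
  have := (hf.tendsto 0).comp (tendsto_pi_single_cofinite_nhds_zero x)
  rwa [nhds_discrete, tendsto_pure] at this

theorem exists_linearMap_apply_pi_single_one {K ι : Type*} [Field K] [DecidableEq ι]
    (c : ι → K) : ∃ F : (ι → K) →ₗ[K] K, ∀ i, F (Pi.single i 1) = c i := by
  obtain ⟨g, hg⟩ := (Finsupp.lcoeFun : (ι →₀ K) →ₗ[K] ι → K).exists_leftInverse_of_injective
    (LinearMap.ker_eq_bot.2 DFunLike.coe_injective)
  refine ⟨Finsupp.linearCombination K c ∘ₗ g, fun i => ?_⟩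
  have hgi : g (Pi.single i 1) = Finsupp.single i 1 := by
    simpa [Finsupp.single_eq_pi_single] using LinearMap.congr_fun hg (Finsupp.single i 1)
  simp [hgi]

theorem exists_discontinuous_hom_prod_zmod2 :
    ∃ f : (ℕ → ZMod 2) →+ ZMod 2, Function.Surjective f ∧ ¬ Continuous f := by
  obtain ⟨F, hF⟩ := exists_linearMap_apply_pi_single_one (fun _ : ℕ => (1 : ZMod 2))
  refine ⟨F.toAddMonoidHom, fun y => ⟨y • Pi.single 0 1, by simp [hF]⟩, fun hc => ?_⟩
  obtain ⟨n, hn⟩ := (hc.eventually_apply_pi_single_eq 1).exists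
  simp [hF] at hn
end

section
/- Every subgroup of (ℝⁿ, +) that is closed in the standard topology is isomorphic (as a topological group) to ℝˡ × ℤᵐ for some natural numbers l, m with l + m ≤ n. -/
/-!
Let `V` be the largest linear subspace contained in `H` and `W` a complement of `V`. Then
`H = V ⊕ (H ∩ W)`, and `H ∩ W` is discrete: if nonzero points `xₖ ∈ H ∩ W` tend to `0`, a limit
`v` of the directions `xₖ / ‖xₖ‖` lies in `W`, and also in `V` because `⌊t / ‖xₖ‖⌋ • xₖ ∈ H`
converges to `t • v` and `H` is closed. A discrete subgroup of `W` is a lattice in its real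
span, hence free of rank at most `dim W`.
-/

open Filter Topology Module Submodule

theorem tendsto_floor_div_mul_nhds {ι : Type*} {l : Filter ι} {a : ι → ℝ}
    (ha : Tendsto a l (𝓝[>] 0)) (t : ℝ) :
    Tendsto (fun i ↦ (⌊t / a i⌋ : ℝ) * a i) l (𝓝 t) := by
  rw [tendsto_iff_norm_sub_tendsto_zero]
  refine squeeze_zero_norm' ?_ (tendsto_nhdsWithin_iff.mp ha).1
  filter_upwards [ha self_mem_nhdsWithin] with i (hi : 0 < a i)
  have h1 := Int.floor_le (t / a i)
  have h2 := Int.sub_one_lt_floor (t / a i)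
  rw [norm_norm, Real.norm_eq_abs, abs_le]
  constructor <;> nlinarith [div_mul_cancel₀ t hi.ne']

theorem finrank_int_le_of_discreteTopology {E : Type*} [NormedAddCommGroup E] [NormedSpace ℝ E]
    [FiniteDimensional ℝ E] (L : Submodule ℤ E) [DiscreteTopology L] {W : Submodule ℝ E}
    (hLW : (L : Set E) ⊆ W) : finrank ℤ L ≤ finrank ℝ W := by
  have h := Real.finrank_eq_int_finrank_of_discrete (s := (L : Set E)) (by rwa [span_eq])
  rw [Set.finrank, Set.finrank, span_eq] at h
  exact h ▸ finrank_mono (span_le.mpr hLW)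

noncomputable def continuousAddEquivFinFunOfDiscreteTopology {E : Type*} [NormedAddCommGroup E]
    [NormedSpace ℝ E] [FiniteDimensional ℝ E] (L : Submodule ℤ E) [DiscreteTopology L] :
    L ≃ₜ+ (Fin (finrank ℤ L) → ℤ) :=
  (finBasis ℤ L).equivFun.toAddEquiv.toContinuousAddEquiv fun _ ↦ by simp only [isOpen_discrete]

def ContinuousAddEquiv.prodCongr {A B C D : Type*} [AddZeroClass A] [AddZeroClass B]
    [AddZeroClass C] [AddZeroClass D] [TopologicalSpace A] [TopologicalSpace B]
    [TopologicalSpace C] [TopologicalSpace D] (e₁ : A ≃ₜ+ B) (e₂ : C ≃ₜ+ D) :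
    A × C ≃ₜ+ B × D where
  __ := e₁.toAddEquiv.prodCongr e₂.toAddEquiv
  __ := e₁.toHomeomorph.prodCongr e₂.toHomeomorph

namespace AddSubgroup

variable {E : Type*} [NormedAddCommGroup E] [NormedSpace ℝ E] (H : AddSubgroup E)

def lineality : Submodule ℝ E where
  carrier := {x | ∀ t : ℝ, t • x ∈ H}
  zero_mem' t := by simp
  add_mem' hx hy t := by simpa only [smul_add] using H.add_mem (hx t) (hy t)
  smul_mem' c x hx t := by simpa only [smul_smul] using hx (t * c)

variable {H}

theorem mem_of_mem_lineality {x : E} (hx : x ∈ H.lineality) : x ∈ H := by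
  simpa using hx 1

theorem mem_lineality_of_tendsto (hc : IsClosed (H : Set E)) {x : ℕ → E} (hxH : ∀ k, x k ∈ H)
    (hx : Tendsto (fun k ↦ ‖x k‖) atTop (𝓝[>] 0)) {v : E}
    (hv : Tendsto (fun k ↦ ‖x k‖⁻¹ • x k) atTop (𝓝 v)) : v ∈ H.lineality := by
  intro t
  have hpos : ∀ᶠ k in atTop, 0 < ‖x k‖ := hx self_mem_nhdsWithin
  refine hc.mem_of_tendsto (((tendsto_floor_div_mul_nhds hx t).smul hv).congr' ?_)
    (Eventually.of_forall fun k ↦ H.zsmul_mem (hxH k) ⌊t / ‖x k‖⌋)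
  filter_upwards [hpos] with k hk
  rw [smul_smul, mul_assoc, mul_inv_cancel₀ hk.ne', mul_one, Int.cast_smul_eq_zsmul]

variable (H) in
def interSubspace (W : Submodule ℝ E) : Submodule ℤ E :=
  H.toIntSubmodule ⊓ W.restrictScalars ℤ

theorem mem_interSubspace {W : Submodule ℝ E} {x : E} :
    x ∈ H.interSubspace W ↔ x ∈ H ∧ x ∈ W :=
  Iff.rfl

theorem discreteTopology_interSubspace [FiniteDimensional ℝ E] (hc : IsClosed (H : Set E))
    {W : Submodule ℝ E} (hW : Disjoint H.lineality W) : DiscreteTopology (H.interSubspace W) := by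
  rw [discreteTopology_iff_isOpen_singleton_zero, Metric.isOpen_singleton_iff]
  by_contra! hacc
  choose y hy_lt hy_ne using fun k : ℕ ↦ hacc (1 / (k + 1)) Nat.one_div_pos_of_nat
  set x : ℕ → E := fun k ↦ y k
  have hx_pos : ∀ k, 0 < ‖x k‖ := fun k ↦ norm_pos_iff.mpr (by simpa [x] using hy_ne k)
  have hx_lim : Tendsto (fun k ↦ ‖x k‖) atTop (𝓝[>] 0) := by
    refine tendsto_nhdsWithin_iff.mpr ⟨?_, .of_forall hx_pos⟩
    refine squeeze_zero (fun k ↦ (hx_pos k).le) (fun k ↦ ?_)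
      tendsto_one_div_add_atTop_nhds_zero_nat
    simpa [x] using (hy_lt k).le
  have hu : ∀ k, ‖x k‖⁻¹ • x k ∈ Metric.sphere (0 : E) 1 := fun k ↦ by
    simp [norm_smul, (hx_pos k).ne']
  obtain ⟨v, hv, φ, hφ, hφv⟩ := (isCompact_sphere (0 : E) 1).tendsto_subseq hu
  have hvW : v ∈ W := W.closed_of_finiteDimensional.mem_of_tendsto hφv
    (.of_forall fun k ↦ W.smul_mem _ (y (φ k)).2.2)
  have hvH : v ∈ H.lineality := mem_lineality_of_tendsto hc (fun k ↦ (y (φ k)).2.1)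
    (hx_lim.comp hφ.tendsto_atTop) hφv
  have : v = 0 := (Submodule.disjoint_def.mp hW) v hvH hvW
  simp [this] at hv

theorem projection_mem_interSubspace {W : Submodule ℝ E} (hW : IsCompl H.lineality W) (h : H) :
    W.projection H.lineality hW.symm h ∈ H.interSubspace W := by
  refine mem_interSubspace.mpr ⟨?_, projection_apply_mem _ _⟩
  rw [projection_eq_self_sub_projection hW]
  exact H.sub_mem h.2 (mem_of_mem_lineality (projection_apply_mem _ _))

variable [FiniteDimensional ℝ E]

noncomputable def linealityProdEquiv {W : Submodule ℝ E} (hW : IsCompl H.lineality W) :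
    H ≃ₜ+ H.lineality × H.interSubspace W where
  toFun h := (H.lineality.projectionOnto W hW h, ⟨_, projection_mem_interSubspace hW h⟩)
  invFun p := ⟨p.1 + p.2, H.add_mem (mem_of_mem_lineality p.1.2) (mem_interSubspace.mp p.2.2).1⟩
  left_inv h := Subtype.ext (projection_add_projection_eq_self hW h)
  right_inv := fun ⟨a, b⟩ ↦ by
    have hbW := (mem_interSubspace.mp b.2).2
    ext
    · simp [projectionOnto_apply_of_mem_right hW hbW]
    · simp [projection_apply_of_mem_left hW.symm hbW, projection_apply_of_mem_right hW.symm a.2]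
  map_add' h h' := by ext <;> simp
  continuous_toFun := by
    have := (H.lineality.projectionOnto W hW).continuous_of_finiteDimensional
    have := (W.projection H.lineality hW.symm).continuous_of_finiteDimensional
    fun_prop
  continuous_invFun := by fun_prop

theorem exists_continuousAddEquiv_of_isClosed (hc : IsClosed (H : Set E)) :
    ∃ l m : ℕ, l + m ≤ finrank ℝ E ∧ Nonempty (H ≃ₜ+ (Fin l → ℝ) × (Fin m → ℤ)) := by
  obtain ⟨W, hW⟩ := H.lineality.exists_isCompl
  have := discreteTopology_interSubspace hc hW.disjoint
  have hrank : finrank ℤ (H.interSubspace W) ≤ finrank ℝ W :=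
    finrank_int_le_of_discreteTopology _ fun _ hx ↦ (mem_interSubspace.mp hx).2
  refine ⟨finrank ℝ H.lineality, finrank ℤ (H.interSubspace W), ?_, ⟨?_⟩⟩
  · have := finrank_add_eq_of_isCompl hW
    omega
  · exact (linealityProdEquiv hW).trans <| ContinuousAddEquiv.prodCongr
      (ContinuousLinearEquiv.ofFinrankEq (finrank_fin_fun ℝ).symm).toContinuousAddEquiv
      (continuousAddEquivFinFunOfDiscreteTopology _)

end AddSubgroup

theorem closed_subgroup_of_Rn (n : ℕ) (H : AddSubgroup (Fin n → ℝ))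
    (hc : IsClosed (H : Set (Fin n → ℝ))) :
    ∃ l m : ℕ, l + m ≤ n ∧
      ∃ e : H ≃+ ((Fin l → ℝ) × (Fin m → ℤ)),
        Continuous e ∧ Continuous e.symm := by
  obtain ⟨l, m, hlm, ⟨e⟩⟩ := H.exists_continuousAddEquiv_of_isClosed hc
  exact ⟨l, m, by simpa using hlm, e, e.continuous_toFun, e.continuous_invFun⟩
end

section
/- In a totally disconnected locally compact Hausdorff group, every neighbourhood of the identity contains a compact open subgroup (van Dantzig's theorem). -/
/-!
Since the space has a basis of clopen sets, `1` has a compact open neighbourhood `W ⊆ U`. By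
compactness there is a neighbourhood `V` of `1` with `W * V ⊆ W`; replacing `V` by `V ∩ V⁻¹`,
right multiplication by every element of the subgroup generated by `V` maps `W` into itself, so
that subgroup lies in `W` (evaluate at `1 ∈ W`). It is open since it contains `V`, hence closed,
hence compact as a closed subset of `W`.
-/

open Set Filter Topology Pointwise

theorem exists_isCompact_isOpen_subset_of_mem_nhds {X : Type*} [TopologicalSpace X]
    [LocallyCompactSpace X] [T2Space X] [TotallyDisconnectedSpace X] {x : X} {U : Set X}
    (hU : U ∈ 𝓝 x) : ∃ W, IsCompact W ∧ IsOpen W ∧ x ∈ W ∧ W ⊆ U := by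
  obtain ⟨C, hC, hCU, hCc⟩ := local_compact_nhds hU
  obtain ⟨W, ⟨hWclopen, hxW⟩, hWC⟩ :=
    loc_compact_Haus_tot_disc_of_zero_dim.nhds_hasBasis.mem_iff.mp hC
  exact ⟨W, hCc.of_isClosed_subset hWclopen.isClosed hWC, hWclopen.isOpen, hxW, hWC.trans hCU⟩

theorem Subgroup.closure_subset_of_mul_subset {G : Type*} [Group G] {W V : Set G}
    (h1 : (1 : G) ∈ W) (hV : W * V ⊆ W) (hVinv : W * V⁻¹ ⊆ W) :
    (Subgroup.closure V : Set G) ⊆ W := by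
  intro g hg
  suffices ∀ w ∈ W, w * g ∈ W ∧ w * g⁻¹ ∈ W by simpa using (this 1 h1).1
  induction hg using Subgroup.closure_induction with
  | mem v hv =>
    exact fun w hw ↦ ⟨hV (mul_mem_mul hw hv), hVinv (mul_mem_mul hw (inv_mem_inv.mpr hv))⟩
  | one => simp
  | mul x y _ _ hx hy =>
    intro w hw
    refine ⟨?_, ?_⟩
    · simpa [mul_assoc] using (hy _ (hx w hw).1).1
    · simpa [mul_assoc] using (hx _ (hy w hw).2).2
  | inv x _ hx => exact fun w hw ↦ by simpa [and_comm] using hx w hw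

theorem IsCompact.exists_openSubgroup_subset {G : Type*} [Group G] [TopologicalSpace G]
    [IsTopologicalGroup G] {W : Set G} (hWc : IsCompact W) (hWo : IsOpen W) (h1 : (1 : G) ∈ W) :
    ∃ H : OpenSubgroup G, (H : Set G) ⊆ W := by
  obtain ⟨V, hV, hVW⟩ := compact_open_separated_mul_right hWc hWo subset_rfl
  let S := V ∩ V⁻¹
  have hS : S ∈ 𝓝 (1 : G) := inter_mem hV (inv_mem_nhds_one G hV)
  have hSW : W * S ⊆ W := (mul_subset_mul_left inter_subset_left).trans hVW
  have hSinvW : W * S⁻¹ ⊆ W := by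
    refine (mul_subset_mul_left ?_).trans hVW
    simp [S, inter_subset_right]
  let H := Subgroup.closure S
  refine ⟨⟨H, H.isOpen_of_mem_nhds (mem_of_superset hS Subgroup.subset_closure)⟩, ?_⟩
  exact Subgroup.closure_subset_of_mul_subset h1 hSW hSinvW

theorem van_Dantzig {L : Type*} [Group L] [TopologicalSpace L] [IsTopologicalGroup L]
    [LocallyCompactSpace L] [T2Space L] [TotallyDisconnectedSpace L]
    (U : Set L) (hU : U ∈ nhds (1 : L)) :
    ∃ K : Subgroup L, IsCompact (K : Set L) ∧ IsOpen (K : Set L) ∧ (K : Set L) ⊆ U := by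
  obtain ⟨W, hWc, hWo, h1W, hWU⟩ := exists_isCompact_isOpen_subset_of_mem_nhds hU
  obtain ⟨H, hHW⟩ := hWc.exists_openSubgroup_subset hWo h1W
  exact ⟨H, hWc.of_isClosed_subset H.isClosed hHW, H.isOpen, hHW.trans hWU⟩
end
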